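/- arXiv:2110.01419 — 2 statements merged into one kernel-verified Lean document; each statement's English description precedes it below -/
import Mathlib

section
/- For any two pseudo-differential operators A and B over a differential ring, the residue of the commutator [A,B] = A∘B - B∘A lies in the image of the derivation ∂ₓ; consequently ∫ res[A,B] dx = 0. -/
/-!
The term `a_k (k choose l) ∂ˡ b_{l-1-k}` of `res (A ∘ B)` is paired with the term of `res (B ∘ A)`
of index `(l - 1 - k, l)`. The reflection `(l - 1 - k choose l) = (-1)ˡ (k choose l)` makes
their difference `(k choose l) (u ∂ˡ v - (-1)ˡ (∂ˡ u) v)`, a total derivative by `l`-fold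
integration by parts. The pairing is an involution of the index set `ℤ × ℕ`, so summing over
the (finitely many) nonzero terms exhibits `res [A, B]` as a total derivative.
-/

/-- Generalized binomial coefficient `k(k-1)⋯(k-l+1)/l!` for `k : ℤ`, `l : ℕ`. -/
def zchoose (k : ℤ) (l : ℕ) : ℤ :=
  if 0 ≤ k then (k.toNat).choose l else (-1) ^ l * ((l - 1 - k).toNat).choose l

/-- Composition of pseudo-differential operators `A = Σ aₙ ∂ⁿ`, `B = Σ bₙ ∂ⁿ` (given by
their coefficient functions `ℤ → R`, supported in degrees bounded above) over a
differential ring `(R, d)`, using the rule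
`∂ᵏ ∘ a = Σ_{l≥0} (k(k-1)⋯(k-l+1)/l!) (dˡ a) ∂^{k-l}`. -/
noncomputable def pdoComp {R : Type*} [CommRing R] (d : R → R) (A B : ℤ → R) : ℤ → R :=
  fun n => ∑ᶠ p : ℤ × ℕ, A p.1 * (zchoose p.1 p.2 • d^[p.2] (B (n + p.2 - p.1)))

/-- The formal adjoint `(Σ aₙ ∂ⁿ)† = Σ (-∂)ⁿ ∘ aₙ`. -/
noncomputable def pdoAdj {R : Type*} [CommRing R] (d : R → R) (A : ℤ → R) : ℤ → R :=
  fun m => ∑ᶠ l : ℕ, ((-1) ^ (m + l).natAbs : ℤ) •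
    (zchoose (m + l) l • d^[l] (A (m + l)))

/-- The residue of a pseudo-differential operator: the coefficient of `∂^{-1}`. -/
def pdoRes {R : Type*} [CommRing R] (A : ℤ → R) : R := A (-1)

open Function

theorem zchoose_sub_one_sub (k : ℤ) (l : ℕ) :
    zchoose ((l : ℤ) - 1 - k) l = (-1) ^ l * zchoose k l := by
  unfold zchoose
  rcases le_or_gt 0 k with hk | hk
  · rcases le_or_gt (l : ℤ) k with hlk | hlk
    · rw [if_neg (by omega), if_pos hk, show ((l : ℤ) - 1 - ((l : ℤ) - 1 - k)).toNat = k.toNat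
        by omega]
    · rw [if_pos (by omega), if_pos hk, Nat.choose_eq_zero_of_lt (by omega),
        Nat.choose_eq_zero_of_lt (by omega)]
      simp
  · rw [if_pos (by omega), if_neg (by omega), ← mul_assoc, ← mul_pow]
    norm_num

/-- The index of the term of `res (B ∘ A)` paired with the term `p` of `res (A ∘ B)`. -/
def resPartner (p : ℤ × ℕ) : ℤ × ℕ := ((p.2 : ℤ) - 1 - p.1, p.2)

theorem resPartner_involutive : Involutive resPartner := by
  rintro ⟨k, l⟩
  simp [resPartner]

def pdoCompTerm {R : Type*} [CommRing R] (d : R → R) (A B : ℤ → R) (n : ℤ) (p : ℤ × ℕ) : R :=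
  A p.1 * (zchoose p.1 p.2 • d^[p.2] (B (n + p.2 - p.1)))

theorem pdoComp_eq_finsum {R : Type*} [CommRing R] (d : R → R) (A B : ℤ → R) (n : ℤ) :
    pdoComp d A B n = ∑ᶠ p, pdoCompTerm d A B n p :=
  rfl

section AdditiveDerivation

variable {R : Type*} [CommRing R] (D : R →+ R)

theorem hasFiniteSupport_pdoCompTerm {A B : ℤ → R}
    (hA : ∃ m : ℤ, ∀ n : ℤ, m < n → A n = 0) (hB : ∃ m : ℤ, ∀ n : ℤ, m < n → B n = 0) (n : ℤ) :
    HasFiniteSupport (pdoCompTerm D A B n) := by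
  obtain ⟨a, hA⟩ := hA
  obtain ⟨b, hB⟩ := hB
  refine ((Set.finite_Icc (n - b) a).prod (Set.finite_Iic (a + b - n).toNat)).subset ?_
  rintro ⟨k, l⟩ hp
  have hk : k ≤ a := not_lt.1 fun h => hp (by simp [pdoCompTerm, hA k h])
  have hl : n + l - k ≤ b :=
    not_lt.1 fun h => hp (by simp [pdoCompTerm, hB _ h, iterate_map_zero])
  simp only [Set.mem_prod, Set.mem_Icc, Set.mem_Iic]
  omega

variable {D} (hD : ∀ a b : R, D (a * b) = D a * b + a * D b)
include hD

theorem mul_iterate_sub_iterate_mul_mem_range (l : ℕ) (u v : R) :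
    u * D^[l] v - (-1) ^ l * (D^[l] u * v) ∈ D.range := by
  induction l generalizing u with
  | zero => simp
  | succ l ih =>
    have hstep : u * D^[l + 1] v - (-1) ^ (l + 1) * (D^[l + 1] u * v) =
        D (u * D^[l] v) - (D u * D^[l] v - (-1) ^ l * (D^[l] (D u) * v)) := by
      rw [hD, iterate_succ_apply', iterate_succ_apply]
      ring
    rw [hstep]
    exact sub_mem ⟨_, rfl⟩ (ih (D u))

theorem pdoCompTerm_sub_resPartner_mem_range (A B : ℤ → R) (p : ℤ × ℕ) :
    pdoCompTerm D A B (-1) p - pdoCompTerm D B A (-1) (resPartner p) ∈ D.range := by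
  obtain ⟨k, l⟩ := p
  have hpair : pdoCompTerm D A B (-1) (k, l) - pdoCompTerm D B A (-1) (resPartner (k, l)) =
      zchoose k l • (A k * D^[l] (B (l - 1 - k)) - (-1) ^ l * (D^[l] (A k) * B (l - 1 - k))) := by
    simp only [pdoCompTerm, resPartner, zchoose_sub_one_sub,
      show -1 + (l : ℤ) - ((l : ℤ) - 1 - k) = k by ring, show -1 + (l : ℤ) - k = l - 1 - k by ring,
      zsmul_eq_mul, Int.cast_mul, Int.cast_pow, Int.cast_neg, Int.cast_one]
    ring
  rw [hpair]
  exact zsmul_mem (mul_iterate_sub_iterate_mul_mem_range hD l _ _) _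

theorem pdoRes_commutator_mem_range {A B : ℤ → R}
    (hA : ∃ m : ℤ, ∀ n : ℤ, m < n → A n = 0) (hB : ∃ m : ℤ, ∀ n : ℤ, m < n → B n = 0) :
    pdoRes (fun n => pdoComp D A B n - pdoComp D B A n) ∈ D.range := by
  have hpaired : pdoComp D B A (-1) = ∑ᶠ p, pdoCompTerm D B A (-1) (resPartner p) :=
    (finsum_comp_equiv (resPartner_involutive.toPerm _)).symm
  have hfin : HasFiniteSupport fun p => pdoCompTerm D B A (-1) (resPartner p) :=
    (hasFiniteSupport_pdoCompTerm D hB hA _).preimage resPartner_involutive.injective.injOn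
  rw [pdoRes, pdoComp_eq_finsum, hpaired,
    ← finsum_sub_distrib (hasFiniteSupport_pdoCompTerm D hA hB _) hfin]
  exact finsum_induction (· ∈ D.range) (zero_mem _) (fun _ _ => add_mem)
    (pdoCompTerm_sub_resPartner_mem_range hD A B)

end AdditiveDerivation

theorem pdo_res_commutator_total_derivative_general {R : Type*} [CommRing R] (d : R → R)
    (hdadd : ∀ a b : R, d (a + b) = d a + d b)
    (hdmul : ∀ a b : R, d (a * b) = d a * b + a * d b)
    (A B : ℤ → R)
    (hA : ∃ m : ℤ, ∀ n : ℤ, m < n → A n = 0)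
    (hB : ∃ m : ℤ, ∀ n : ℤ, m < n → B n = 0) :
    pdoRes (fun n => pdoComp d A B n - pdoComp d B A n) ∈ Set.range d := by
  let D : R →+ R := AddMonoidHom.mk' d hdadd
  exact D.coe_range ▸ pdoRes_commutator_mem_range (D := D) hdmul hA hB

/-- For pseudo-differential operators `A, B` over a commutative differential ring `(R, ∂ₓ)`,
the residue of the commutator `[A,B] = A∘B - B∘A` lies in the image of the derivation
`∂ₓ`; consequently `∫ res[A,B] dx = 0` in the quotient of `R` by the image of `∂ₓ`. -/
theorem pdo_res_commutator_total_derivative {R : Type*} [CommRing R] (d : R → R)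
    (hd0 : d 0 = 0) (hdadd : ∀ a b : R, d (a + b) = d a + d b)
    (hdmul : ∀ a b : R, d (a * b) = d a * b + a * d b)
    (A B : ℤ → R)
    (hA : ∃ m : ℤ, ∀ n : ℤ, m < n → A n = 0)
    (hB : ∃ m : ℤ, ∀ n : ℤ, m < n → B n = 0) :
    pdoRes (fun n => pdoComp d A B n - pdoComp d B A n) ∈ Set.range d :=
  pdo_res_commutator_total_derivative_general d hdadd hdmul A B hA hB
end

section
/- For k ≥ 1, the residue w_k := res L^k of the k-th power of the KP Lax operator satisfies ∂w_k/∂f_k = k, i.e. Σ_{a+b=k-1} res(L^a ∘ ∂ₓ^{-k} ∘ L^b) = k. Consequently the change of variables f_k ↦ w_k is triangular: w_k - k f_k depends only on the variables f_a^{(l)} with a ≤ k-1. -/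
/-- The differential polynomial ring `ℂ[f_i^{(j)}]` in the variables `f_i^{(j)}`,
`i ≥ 1`, `j ≥ 0` (indexed by pairs `(i,j)`). -/
noncomputable abbrev DPRing : Type := MvPolynomial (ℕ × ℕ) ℂ

/-- The variable `f_i^{(j)}`. -/
noncomputable def fv (i j : ℕ) : DPRing := MvPolynomial.X (i, j)

/-- The derivation `∂ₓ` with `∂ₓ f_i^{(j)} = f_i^{(j+1)}`. -/
noncomputable def Dx : Derivation ℂ DPRing DPRing :=
  MvPolynomial.mkDerivation ℂ (fun p : ℕ × ℕ => MvPolynomial.X (p.1, p.2 + 1))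

/-- The KP Lax operator `L = ∂ₓ + Σ_{i≥1} fᵢ ∂ₓ^{-i}` as a coefficient function. -/
noncomputable def Lop : ℤ → DPRing :=
  fun n => if n = 1 then 1 else if n ≤ -1 then fv (-n).toNat 0 else 0

/-- Powers of a pseudo-differential operator. -/
noncomputable def pdoPow {R : Type*} [CommRing R] (d : R → R) (A : ℤ → R) : ℕ → (ℤ → R)
  | 0 => fun n => if n = 0 then 1 else 0
  | k + 1 => pdoComp d A (pdoPow d A k)

/-- `L^k` as a pseudo-differential operator. -/
noncomputable def Lpow (k : ℕ) : ℤ → DPRing := pdoPow (⇑Dx) Lop k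

/-- The purely differential part `A₊` of a pseudo-differential operator. -/
def pdoPlus {R : Type*} [CommRing R] (A : ℤ → R) : ℤ → R :=
  fun n => if 0 ≤ n then A n else 0

/-- The commutator of two pseudo-differential operators. -/
noncomputable def pdoBracket {R : Type*} [CommRing R] (d : R → R) (A B : ℤ → R) : ℤ → R :=
  fun n => pdoComp d A B n - pdoComp d B A n

/-- `S_{i,2}`: the coefficient of `∂ₓ^{-i}` in `[(L²)₊, L]`, i.e. the second KP flow
`∂fᵢ/∂T₂`. -/
noncomputable def S2 (i : ℕ) : DPRing :=
  pdoBracket (⇑Dx) (pdoPlus (Lpow 2)) Lop (-(i : ℤ))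

/-- The total degree of a monomial (exponent function). -/
def mdeg (m : (ℕ × ℕ) →₀ ℕ) : ℕ := ∑ x ∈ m.support, m x

/-!
The derivation `∂/∂f_k` commutes with `∂ₓ`, so it obeys the Leibniz rule on compositions of
pseudo-differential operators. Since `∂L/∂f_k = ∂ₓ^{-k}` and `L` is monic of order one, comparing
leading coefficients shows that `∂(L^j)/∂f_k` has order `j - 1 - k` with leading coefficient `j`;
for `j = k` this is `∂w_k/∂f_k = k`. The same comparison gives
`res(L^a ∘ ∂ₓ^{-k} ∘ L^b) = 1` for `a + b = k - 1`. Finally `w_k` is homogeneous of degree `k + 1`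
for the grading `deg f_i^{(j)} = i + 1 + j`, and the only monomial of that degree containing a
variable `f_a^{(l)}` with `a ≥ k` is `f_k` itself; its coefficient is `∂w_k/∂f_k`.
-/

open MvPolynomial

lemma zchoose_zero (k : ℤ) : zchoose k 0 = 1 := by
  unfold zchoose; split <;> simp

section PseudoDifferential

variable {R : Type*} [CommRing R] {d : R → R}

def PdoOrderLE (A : ℤ → R) (a : ℤ) : Prop := ∀ m, a < m → A m = 0

lemma PdoOrderLE.comp_left {S : Type*} [FunLike S R R] [AddMonoidHomClass S R R] (f : S)
    {A : ℤ → R} {a : ℤ} (hA : PdoOrderLE A a) : PdoOrderLE (f ∘ A) a :=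
  fun m hm => by simp [hA m hm]

lemma pdoComp_apply (A B : ℤ → R) (n : ℤ) :
    pdoComp d A B n = ∑ᶠ p : ℤ × ℕ, A p.1 * (zchoose p.1 p.2 • d^[p.2] (B (n + p.2 - p.1))) :=
  rfl

lemma pdoOrderLE_ite (c : ℤ) : PdoOrderLE (fun n => if n = c then (1 : R) else 0) c :=
  fun _ hm => if_neg hm.ne'

variable (hd : d 0 = 0) {A B : ℤ → R} {a b : ℤ}
include hd

lemma pdoComp_summand_eq_zero (hA : PdoOrderLE A a) (hB : PdoOrderLE B b) {n : ℤ} {p : ℤ × ℕ}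
    (hp : a < p.1 ∨ b < n + p.2 - p.1) :
    A p.1 * (zchoose p.1 p.2 • d^[p.2] (B (n + p.2 - p.1))) = 0 := by
  rcases hp with hp | hp
  · rw [hA _ hp, zero_mul]
  · rw [hB _ hp, Function.iterate_fixed hd, smul_zero, mul_zero]

lemma PdoOrderLE.pdoComp (hA : PdoOrderLE A a) (hB : PdoOrderLE B b) :
    PdoOrderLE (pdoComp d A B) (a + b) :=
  fun n hn => finsum_eq_zero_of_forall_eq_zero fun p =>
    pdoComp_summand_eq_zero hd hA hB (by omega)

lemma pdoComp_apply_add (hA : PdoOrderLE A a) (hB : PdoOrderLE B b) :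
    pdoComp d A B (a + b) = A a * B b := by
  rw [pdoComp_apply, finsum_eq_single _ (a, 0)]
  · simp [zchoose_zero]
  · rintro ⟨p, l⟩ hpl
    refine pdoComp_summand_eq_zero hd hA hB ?_
    simp only [ne_eq, Prod.mk.injEq, not_and_or] at hpl
    omega

lemma PdoOrderLE.pdoPow (hA : PdoOrderLE A a) (k : ℕ) : PdoOrderLE (pdoPow d A k) (k * a) := by
  induction k with
  | zero => intro m hm; exact if_neg (by omega)
  | succ k ih =>
    rw [show ((k + 1 : ℕ) : ℤ) * a = a + k * a by push_cast; ring]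
    exact hA.pdoComp hd ih

lemma pdoPow_apply_mul (hA : PdoOrderLE A a) (k : ℕ) : pdoPow d A k (k * a) = A a ^ k := by
  induction k with
  | zero => simp [pdoPow]
  | succ k ih =>
    rw [pdoPow, show ((k + 1 : ℕ) : ℤ) * a = a + k * a by push_cast; ring,
      pdoComp_apply_add hd hA (hA.pdoPow hd k), ih, pow_succ']

lemma hasFiniteSupport_pdoComp_summand (hA : PdoOrderLE A a) (hB : PdoOrderLE B b) (n : ℤ) :
    Function.HasFiniteSupport
      fun p : ℤ × ℕ => A p.1 * (zchoose p.1 p.2 • d^[p.2] (B (n + p.2 - p.1))) := by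
  refine ((Set.finite_Icc (n - b) a).prod (Set.finite_Iic (a + b - n).toNat)).subset ?_
  intro p hp
  by_contra hmem
  simp only [Set.mem_prod, Set.mem_Icc, Set.mem_Iic] at hmem
  exact hp (pdoComp_summand_eq_zero hd hA hB (by omega))

end PseudoDifferential

section Derivation

variable {S R : Type*} [CommRing S] [CommRing R] [Algebra S R] {d : R → R}
  (D : Derivation S R R) (hDd : ∀ x, D (d x) = d (D x)) (hd : d 0 = 0) {A B : ℤ → R} {a b e : ℤ}
include hDd hd

theorem Derivation.map_pdoComp (hA : PdoOrderLE A a) (hB : PdoOrderLE B b) (n : ℤ) :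
    D (pdoComp d A B n) = pdoComp d (D ∘ A) B n + pdoComp d A (D ∘ B) n := by
  -- The order bounds make the `finsum`s finite sums, so that `D` can be pushed inside.
  have hcomm : Function.Commute D d := hDd
  rw [pdoComp_apply, map_finsum D (hasFiniteSupport_pdoComp_summand hd hA hB n), pdoComp_apply,
    pdoComp_apply, ← finsum_add_distrib
      (hasFiniteSupport_pdoComp_summand hd (hA.comp_left D) hB n)
      (hasFiniteSupport_pdoComp_summand hd hA (hB.comp_left D) n)]
  refine finsum_congr fun p => ?_
  rw [Derivation.leibniz, map_zsmul, hcomm.iterate_right, smul_eq_mul, smul_eq_mul]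
  simp only [Function.comp_apply, smul_mul_assoc, mul_smul_comm]
  ring

lemma Derivation.pdoOrderLE_comp_pdoPow (hA : PdoOrderLE A 1) (hDA : PdoOrderLE (D ∘ A) e)
    (j : ℕ) : PdoOrderLE (D ∘ pdoPow d A j) (e + j - 1) := by
  induction j with
  | zero =>
    intro m _
    show D (if m = 0 then 1 else 0) = 0
    split_ifs <;> simp
  | succ j ih =>
    intro m hm
    have hfirst := hDA.pdoComp hd (hA.pdoPow hd j)
    have hsecond := hA.pdoComp hd ih
    rw [Function.comp_apply, pdoPow, D.map_pdoComp hDd hd hA (hA.pdoPow hd j),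
      hfirst m (by push_cast at hm; omega), hsecond m (by push_cast at hm; omega), add_zero]

lemma Derivation.map_pdoPow_apply (hA : PdoOrderLE A 1) (hA1 : A 1 = 1)
    (hDA : PdoOrderLE (D ∘ A) e) (j : ℕ) : D (pdoPow d A j (e + j - 1)) = j • D (A e) := by
  induction j with
  | zero =>
    show D (if e + 0 - 1 = 0 then 1 else 0) = 0 • D (A e)
    split_ifs <;> simp
  | succ j ih =>
    have hfirst := pdoComp_apply_add hd hDA (hA.pdoPow hd j)
    have hsecond := pdoComp_apply_add hd hA (D.pdoOrderLE_comp_pdoPow hDd hd hA hDA j)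
    rw [pdoPow, D.map_pdoComp hDd hd hA (hA.pdoPow hd j),
      show e + ((j + 1 : ℕ) : ℤ) - 1 = e + j * 1 by push_cast; ring, hfirst,
      show e + (j : ℤ) * 1 = 1 + (e + j - 1) by ring, hsecond, pdoPow_apply_mul hd hA,
      Function.comp_apply, Function.comp_apply, ih, hA1, one_pow, mul_one, one_mul, succ_nsmul']

end Derivation

section Graded

variable {R σ : Type*} [SetLike σ R] (H : ℤ → σ) {d : R → R}
  (hd : ∀ m x, x ∈ H m → d x ∈ H (m + 1))
include hd

lemma iterate_mem_graded (l : ℕ) {m : ℤ} {x : R} (hx : x ∈ H m) : d^[l] x ∈ H (m + l) := by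
  induction l generalizing m x with
  | zero => simpa using hx
  | succ l ih =>
    rw [Function.iterate_succ_apply, Nat.cast_succ, ← add_assoc, add_right_comm]
    exact ih (hd m x hx)

variable [CommRing R] [AddSubgroupClass σ R] {A B : ℤ → R} {a b : ℤ}

lemma pdoComp_mem_graded [SetLike.GradedMul H] (hA : ∀ m, A m ∈ H (a - m))
    (hB : ∀ m, B m ∈ H (b - m)) (n : ℤ) : pdoComp d A B n ∈ H (a + b - n) := by
  refine finsum_induction (· ∈ H (a + b - n)) (zero_mem _) (fun _ _ => add_mem) fun p => ?_
  have hterm := SetLike.GradedMul.mul_mem (hA p.1)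
    (zsmul_mem (iterate_mem_graded H hd p.2 (hB (n + p.2 - p.1))) (zchoose p.1 p.2))
  convert hterm using 2
  ring

lemma pdoPow_mem_graded [SetLike.GradedMonoid H] (hA : ∀ m, A m ∈ H (a - m)) (k : ℕ) (m : ℤ) :
    pdoPow d A k m ∈ H (k * a - m) := by
  induction k generalizing m with
  | zero =>
    show (if m = 0 then 1 else 0) ∈ _
    split_ifs with hm
    · simpa [hm] using SetLike.GradedOne.one_mem
    · exact zero_mem _
  | succ k ih =>
    rw [pdoPow]
    convert pdoComp_mem_graded H hd hA ih m using 2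
    push_cast
    ring

end Graded

section KP

attribute [local instance] WeightedHomogeneousSubmodule.gradedMonoid

def fvWeight (p : ℕ × ℕ) : ℤ := p.1 + 1 + p.2

lemma fvWeight_pos (p : ℕ × ℕ) : 0 < fvWeight p := by
  unfold fvWeight
  positivity

lemma Dx_X (p : ℕ × ℕ) : Dx (X p) = X (p.1, p.2 + 1) :=
  mkDerivation_X ℂ _ p

lemma Dx_mem_weightedHomogeneous {m : ℤ} {φ : DPRing}
    (hφ : φ ∈ weightedHomogeneousSubmodule ℂ fvWeight m) :
    Dx φ ∈ weightedHomogeneousSubmodule ℂ fvWeight (m + 1) := by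
  rw [φ.as_sum, map_sum]
  refine Submodule.sum_mem _ fun s hs => ?_
  have hs : Finsupp.weight fvWeight s = m := hφ (mem_support_iff.mp hs)
  rw [Dx, mkDerivation_monomial, Finsupp.sum]
  refine Submodule.smul_mem _ _ (Submodule.sum_mem _ fun i hi => ?_)
  have hdeg :
      Finsupp.weight fvWeight (s - Finsupp.single i 1) + fvWeight (i.1, i.2 + 1) = m + 1 := by
    rw [← hs, ← Finsupp.weight_sub_single_add (Finsupp.mem_support_iff.mp hi)]
    simp only [fvWeight]
    push_cast
    ring
  rw [smul_eq_mul, mem_weightedHomogeneousSubmodule, ← hdeg]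
  exact (isWeightedHomogeneous_monomial _ _ _ rfl).mul (isWeightedHomogeneous_X _ _ _)

lemma Lop_mem_weightedHomogeneous (n : ℤ) :
    Lop n ∈ weightedHomogeneousSubmodule ℂ fvWeight (1 - n) := by
  unfold Lop
  split_ifs with h1 h2
  · subst h1
    exact isWeightedHomogeneous_one ℂ fvWeight
  · rw [fv, mem_weightedHomogeneousSubmodule]
    convert isWeightedHomogeneous_X ℂ fvWeight ((-n).toNat, 0) using 1
    simp only [fvWeight]
    omega
  · exact zero_mem _

lemma Lpow_mem_weightedHomogeneous (k : ℕ) (n : ℤ) :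
    Lpow k n ∈ weightedHomogeneousSubmodule ℂ fvWeight (k - n) := by
  simpa [Lpow] using pdoPow_mem_graded _ (fun m φ => Dx_mem_weightedHomogeneous)
    Lop_mem_weightedHomogeneous k n

lemma Lop_orderLE : PdoOrderLE Lop 1 :=
  fun m hm => by unfold Lop; rw [if_neg (by omega), if_neg (by omega)]

lemma Lop_one : Lop 1 = 1 := if_pos rfl

lemma Lpow_orderLE (k : ℕ) : PdoOrderLE (Lpow k) k := by
  simpa [Lpow] using Lop_orderLE.pdoPow (map_zero Dx) k

lemma Lpow_self (k : ℕ) : Lpow k k = 1 := by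
  simpa [Lpow, Lop_one] using pdoPow_apply_mul (map_zero Dx) Lop_orderLE k

lemma pdoComp_Lpow_ite_Lpow_apply {a b k : ℕ} (hk : a + b + 1 = k) :
    pdoComp Dx (Lpow a)
      (pdoComp Dx (fun n => if n = -(k : ℤ) then 1 else 0) (Lpow b)) (-1) = 1 := by
  have hinner := (pdoOrderLE_ite (-(k : ℤ))).pdoComp (map_zero Dx) (Lpow_orderLE b)
  rw [show (-1 : ℤ) = a + (-k + b) by omega,
    pdoComp_apply_add (map_zero Dx) (Lpow_orderLE a) hinner,
    pdoComp_apply_add (map_zero Dx) (pdoOrderLE_ite _) (Lpow_orderLE b), Lpow_self, Lpow_self]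
  simp

lemma pderiv_Dx_comm (i : ℕ) (φ : DPRing) : pderiv (i, 0) (Dx φ) = Dx (pderiv (i, 0) φ) := by
  have h : ⁅pderiv (i, 0), Dx⁆ = 0 := derivation_ext fun q => by
    rw [Derivation.commutator_apply, Dx_X, pderiv_X, pderiv_X, Pi.single_apply, Pi.single_apply,
      if_neg (by simp)]
    split_ifs <;> simp
  simpa [Derivation.commutator_apply, sub_eq_zero] using congr($h φ)

lemma pderiv_comp_Lop {i : ℕ} (hi : i ≠ 0) :
    pderiv (i, 0) ∘ Lop = fun n => if n = -(i : ℤ) then 1 else 0 := by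
  funext n
  simp only [Function.comp_apply, Lop, fv]
  split_ifs <;> simp [pderiv_X, Pi.single_apply] <;> omega

lemma pderiv_Lpow_neg_one {k : ℕ} (hk : k ≠ 0) : pderiv (k, 0) (Lpow k (-1)) = k := by
  have h := (pderiv (k, 0)).map_pdoPow_apply (pderiv_Dx_comm k) (map_zero Dx) Lop_orderLE
    Lop_one (pderiv_comp_Lop hk ▸ pdoOrderLE_ite _) k
  have hu : pderiv (k, 0) (Lop (-k)) = 1 := by simpa using congrFun (pderiv_comp_Lop hk) (-k)
  simpa [Lpow, hu] using h

end KP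

lemma eq_single_of_fvWeight_eq {k : ℕ} {s : ℕ × ℕ →₀ ℕ}
    (hs : Finsupp.weight fvWeight s = k + 1) {v : ℕ × ℕ} (hv : s v ≠ 0) (hkv : k ≤ v.1) :
    s = Finsupp.single (k, 0) 1 := by
  have hsplit := Finsupp.weight_sub_single_add (w := fvWeight) hv
  have hwv : fvWeight v = v.1 + 1 + v.2 := rfl
  by_cases ht : s - Finsupp.single v 1 = 0
  · rw [ht, map_zero, zero_add, hs] at hsplit
    rw [← Finsupp.sub_add_single_one_cancel hv, ht, zero_add,
      show v = (k, 0) from Prod.ext (by omega) (by omega)]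
  · obtain ⟨u, hu⟩ := Finsupp.ne_iff.mp ht
    have hle := Finsupp.le_weight_of_ne_zero (fun u => (fvWeight_pos u).le) hu
    have := fvWeight_pos u
    omega

lemma sub_pderiv_mul_X_mem_supported {R : Type*} [CommRing R] {k : ℕ}
    {P : MvPolynomial (ℕ × ℕ) R} (hP : P ∈ weightedHomogeneousSubmodule R fvWeight (k + 1)) :
    P - pderiv (k, 0) P * X (k, 0) ∈ supported R {v : ℕ × ℕ | v.1 < k} := by
  set c := coeff (Finsupp.single (k, 0) 1) P
  have hQ : P - C c * X (k, 0) ∈ supported R {v : ℕ × ℕ | v.1 < k} := by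
    rw [mem_supported]
    intro v hv
    obtain ⟨s, hs, hvs⟩ := (mem_vars_iff_mem_support v).mp hv
    rw [mem_support_iff, coeff_sub, coeff_C_mul, coeff_X] at hs
    by_cases hsk : s = Finsupp.single (k, 0) 1
    · simp [hsk, c] at hs
    · rw [if_neg (Ne.symm hsk), mul_zero, sub_zero] at hs
      by_contra hkv
      exact hsk <|
        eq_single_of_fvWeight_eq (hP hs) (Finsupp.mem_support_iff.mp hvs) (not_lt.mp hkv)
  have hderiv : pderiv (k, 0) P = C c := by
    rw [← sub_add_cancel P (C c * X (k, 0)), map_add,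
      pderiv_eq_zero_of_notMem_vars fun h => lt_irrefl k (mem_supported.mp hQ h),
      pderiv_C_mul, pderiv_X_self, mul_one, zero_add]
  rwa [hderiv]

/-- For `k ≥ 1`, the residue `w_k := res L^k` satisfies `∂w_k/∂f_k = k`, i.e.
`Σ_{a+b=k-1} res(L^a ∘ ∂ₓ^{-k} ∘ L^b) = k`; consequently the change of variables
`f_k ↦ w_k` is triangular: `w_k - k·f_k` depends only on the variables `f_a^{(l)}`
with `a ≤ k-1`. -/
theorem res_Lpow_triangular (k : ℕ) (hk : 1 ≤ k) :
    MvPolynomial.pderiv (k, 0) (Lpow k (-1)) = (k : MvPolynomial (ℕ × ℕ) ℂ) ∧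
      (∑ a ∈ Finset.range k,
        pdoComp (⇑Dx) (Lpow a)
          (pdoComp (⇑Dx) (fun n => if n = -(k : ℤ) then 1 else 0) (Lpow (k - 1 - a))) (-1))
        = (k : MvPolynomial (ℕ × ℕ) ℂ) ∧
      Lpow k (-1) - (k : ℂ) • fv k 0 ∈
        MvPolynomial.supported ℂ {p : ℕ × ℕ | p.1 ≤ k - 1} := by
  have hderiv := pderiv_Lpow_neg_one (k := k) (by omega)
  refine ⟨hderiv, ?_, ?_⟩
  · rw [Finset.sum_congr rfl fun a ha => pdoComp_Lpow_ite_Lpow_apply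
      (by rw [Finset.mem_range] at ha; omega)]
    simp
  · have htri := sub_pderiv_mul_X_mem_supported <| by
      simpa using Lpow_mem_weightedHomogeneous k (-1)
    rw [hderiv] at htri
    have hset : {p : ℕ × ℕ | p.1 ≤ k - 1} = {v | v.1 < k} := Set.ext fun p => by
      show p.1 ≤ k - 1 ↔ p.1 < k
      omega
    rwa [hset, Algebra.smul_def, map_natCast, fv]
end
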